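/- arXiv:2006.08734 — 2 statements merged into one kernel-verified Lean document; each statement's English description precedes it below -/
import Mathlib

section
/- In any loop with the left inverse property, the left nucleus equals the middle nucleus. -/
/-- A loop: binary operation with two-sided identity and unique divisions. -/
class Loop (Q : Type*) extends Mul Q, One Q where
  ld : Q → Q → Q   -- left division: `ld x y = x \ y`
  rd : Q → Q → Q   -- right division: `rd x y = x / y`
  one_mul : ∀ x : Q, 1 * x = x
  mul_one : ∀ x : Q, x * 1 = x
  mul_ld : ∀ x y : Q, x * ld x y = y
  ld_mul : ∀ x y : Q, ld x (x * y) = y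
  rd_mul : ∀ x y : Q, rd x y * y = x
  mul_rd : ∀ x y : Q, rd (x * y) y = x

namespace Loop
variable {Q : Type*} [Loop Q]
/-- left inverse `x^λ = 1 / x` -/
def linv (x : Q) : Q := rd 1 x
/-- right inverse `x^ρ = x \ 1` -/
def rinv (x : Q) : Q := ld x 1
/-- left nucleus -/
def Nl (Q : Type*) [Loop Q] : Set Q := {a | ∀ x y : Q, a * (x * y) = (a * x) * y}
/-- middle nucleus -/
def Nm (Q : Type*) [Loop Q] : Set Q := {a | ∀ x y : Q, x * (a * y) = (x * a) * y}
/-- right nucleus -/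
def Nr (Q : Type*) [Loop Q] : Set Q := {a | ∀ x y : Q, (x * y) * a = x * (y * a)}
/-- the nucleus -/
def N (Q : Type*) [Loop Q] : Set Q := Nl Q ∩ Nm Q ∩ Nr Q
/-- `S` is a subloop -/
def IsSubloop (S : Set Q) : Prop :=
  (1 : Q) ∈ S ∧ ∀ a ∈ S, ∀ b ∈ S, a * b ∈ S ∧ ld a b ∈ S ∧ rd a b ∈ S
/-- normality of a subloop via the standard equational characterization -/
def IsNormal (S : Set Q) : Prop :=
  IsSubloop S ∧ ∀ x y : Q,
    (x * ·) '' S = (· * x) '' S ∧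
    (· * y) '' ((x * ·) '' S) = (x * ·) '' ((· * y) '' S) ∧
    (x * ·) '' ((y * ·) '' S) = ((x * y) * ·) '' S
end Loop

/-! In an LIP loop, `a ↦ a^λ` preserves both `N_λ` and `N_μ`, and it reverses products with a
nuclear factor: `(x a)^λ = a^λ x^λ` for `a ∈ N_λ` and `(a x)^λ = x^λ a^λ` for `a ∈ N_μ`.
For `a ∈ N_λ`, left-multiplying both sides of `x · a y = x a · y` by `(x a)^λ` reduces the
middle law to the left law for `a^λ`; the converse is symmetric. -/

namespace Loop

variable {Q : Type*} [Loop Q]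

protected theorem mul_left_cancel {x y z : Q} (h : x * y = x * z) : y = z := by
  rw [← ld_mul x y, h, ld_mul]

protected theorem mul_right_cancel {x y z : Q} (h : x * z = y * z) : x = y := by
  rw [← mul_rd x z, h, mul_rd]

theorem linv_mul_self (x : Q) : linv x * x = 1 :=
  rd_mul 1 x

theorem eq_linv_of_mul_eq_one {u x : Q} (h : u * x = 1) : u = linv x := by
  rw [linv, ← h, mul_rd]

variable (Q) in
def LeftInverseProperty : Prop :=
  ∀ x y : Q, linv x * (x * y) = y

theorem linv_linv (hlip : LeftInverseProperty Q) (x : Q) : linv (linv x) = x := by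
  simpa only [linv_mul_self, mul_one] using hlip (linv x) x

theorem mul_linv_mul (hlip : LeftInverseProperty Q) (x y : Q) : x * (linv x * y) = y := by
  simpa only [linv_linv hlip] using hlip (linv x) y

theorem mul_linv_self (hlip : LeftInverseProperty Q) (x : Q) : x * linv x = 1 := by
  simpa only [mul_one] using mul_linv_mul hlip x 1

theorem linv_mem_Nl (hlip : LeftInverseProperty Q) {a : Q} (ha : a ∈ Nl Q) : linv a ∈ Nl Q :=
  fun x y => Loop.mul_left_cancel <| by rw [mul_linv_mul hlip, ha, mul_linv_mul hlip]

theorem mul_linv_mul_self_of_mem_Nm (hlip : LeftInverseProperty Q) {a : Q} (ha : a ∈ Nm Q)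
    (u : Q) : u * linv a * a = u := by
  have hR : ∀ v : Q, v * a * linv a = v := fun v => by rw [← ha, mul_linv_self hlip, mul_one]
  exact Loop.mul_right_cancel (hR (u * linv a))

theorem linv_mem_Nm (hlip : LeftInverseProperty Q) {a : Q} (ha : a ∈ Nm Q) : linv a ∈ Nm Q := by
  intro u v
  -- write `v = a * w`, so that `a ∈ Nm` moves the bracket across `a`
  obtain ⟨w, rfl⟩ : ∃ w, a * w = v := ⟨linv a * v, mul_linv_mul hlip a v⟩
  rw [hlip, ha, mul_linv_mul_self_of_mem_Nm hlip ha]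

theorem linv_mul_of_mem_Nl (hlip : LeftInverseProperty Q) {a : Q} (ha : a ∈ Nl Q) (x : Q) :
    linv (x * a) = linv a * linv x :=
  (eq_linv_of_mul_eq_one <| by rw [← linv_mem_Nl hlip ha, hlip, linv_mul_self]).symm

theorem linv_mul_of_mem_Nm (hlip : LeftInverseProperty Q) {a : Q} (ha : a ∈ Nm Q) (x : Q) :
    linv (a * x) = linv x * linv a :=
  (eq_linv_of_mul_eq_one <| by rw [← linv_mem_Nm hlip ha, hlip, linv_mul_self]).symm

theorem Nl_subset_Nm (hlip : LeftInverseProperty Q) : Nl Q ⊆ Nm Q := fun a ha x y =>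
  Loop.mul_left_cancel (x := linv (x * a)) <| by
    rw [hlip, linv_mul_of_mem_Nl hlip ha, ← linv_mem_Nl hlip ha, hlip, hlip]

theorem Nm_subset_Nl (hlip : LeftInverseProperty Q) : Nm Q ⊆ Nl Q := fun a ha x y =>
  Loop.mul_left_cancel (x := linv (a * x)) <| by
    rw [hlip, linv_mul_of_mem_Nm hlip ha, ← linv_mem_Nm hlip ha, hlip, hlip]

end Loop

open Loop in
theorem stmt5 {Q : Type*} [Loop Q] (hlip : ∀ x y : Q, linv x * (x * y) = y) :
    Nl Q = Nm Q :=
  (Nl_subset_Nm hlip).antisymm (Nm_subset_Nl hlip)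
end

section
/- An Osborn loop with the left inverse property is a Moufang loop. Similarly, an Osborn loop that is flexible (xy·x = x·yx) is Moufang, and an Osborn loop with the left alternative property is Moufang. -/
/-!
Write `f y = x^λ \ y`. Putting `z = 1` in the Osborn law gives `f y · x = x · yx`, and the Osborn
law becomes the Moufang law at `x` as soon as `f y = xy`, which is the left inverse property at `x`.
Flexibility turns `f y · x = x · yx` into `f y · x = xy · x`, hence `f y = xy`. Under the left
alternative law both sides of `x · x(vx) = xx · vx` are rewritten by the Osborn law, giving
`f (f v) = f (a v)` with `a = x^λ · xx`, so `f = L_a`; evaluating at `1` gives `a = x`.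
-/

namespace Loop

variable {Q : Type*} [Loop Q]

def IsOsborn (Q : Type*) [Loop Q] : Prop :=
  ∀ x y z : Q, ld (linv x) y * (z * x) = x * ((y * z) * x)

def IsMoufang (Q : Type*) [Loop Q] : Prop :=
  ∀ x y z : Q, (x * y) * (z * x) = x * ((y * z) * x)

def HasLeftInverseProperty (Q : Type*) [Loop Q] : Prop :=
  ∀ x y : Q, linv x * (x * y) = y

def IsFlexible (Q : Type*) [Loop Q] : Prop :=
  ∀ x y : Q, (x * y) * x = x * (y * x)

def IsLeftAlternative (Q : Type*) [Loop Q] : Prop :=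
  ∀ x y : Q, x * (x * y) = (x * x) * y

theorem ld_right_injective (a : Q) : Function.Injective (ld a) := fun b c h => by
  rw [← mul_ld a b, h, mul_ld]

theorem mul_right_cancel_s16 {a b c : Q} (h : b * a = c * a) : b = c := by
  rw [← mul_rd b a, h, mul_rd]

theorem ld_linv_one (x : Q) : ld (linv x) 1 = x := by
  rw [← rd_mul 1 x, linv, ld_mul]

theorem ld_linv_eq_mul_iff {x y : Q} : ld (linv x) y = x * y ↔ linv x * (x * y) = y :=
  ⟨fun h => h ▸ mul_ld _ _, fun h => by rw [← h, ld_mul, h]⟩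

theorem IsOsborn.ld_linv_mul (hosb : IsOsborn Q) (x z : Q) :
    ld (linv x) z * x = x * (z * x) := by
  simpa only [one_mul, mul_one] using hosb x z 1

theorem IsOsborn.isMoufang (hosb : IsOsborn Q) (hlip : HasLeftInverseProperty Q) :
    IsMoufang Q := fun x y z => by
  rw [← ld_linv_eq_mul_iff.2 (hlip x y), hosb]

theorem IsOsborn.hasLeftInverseProperty_of_isFlexible (hosb : IsOsborn Q)
    (hflex : IsFlexible Q) : HasLeftInverseProperty Q := fun x y =>
  ld_linv_eq_mul_iff.1 <| mul_right_cancel_s16 <| by rw [hosb.ld_linv_mul, hflex]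

theorem IsOsborn.hasLeftInverseProperty_of_isLeftAlternative (hosb : IsOsborn Q)
    (hlap : IsLeftAlternative Q) : HasLeftInverseProperty Q := fun x y => by
  set a := linv x * (x * x)
  have hld : ∀ v, ld (linv x) v = a * v := fun v => by
    apply ld_right_injective (linv x)
    apply mul_right_cancel_s16 (a := x)
    calc ld (linv x) (ld (linv x) v) * x = x * (x * (v * x)) := by
          rw [hosb.ld_linv_mul, hosb.ld_linv_mul]
      _ = ld (linv x) a * (v * x) := by rw [hlap, ld_mul]
      _ = ld (linv x) (a * v) * x := by rw [hosb, hosb.ld_linv_mul]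
  have hax : a = x := by simpa only [mul_one, ld_linv_one] using (hld 1).symm
  exact ld_linv_eq_mul_iff.1 (hax ▸ hld y)

end Loop

open Loop in
theorem stmt16 {Q : Type*} [Loop Q]
    (hosb : ∀ x y z : Q, ld (linv x) y * (z * x) = x * ((y * z) * x)) :
    ((∀ x y : Q, linv x * (x * y) = y) → ∀ x y z : Q, (x * y) * (z * x) = x * ((y * z) * x)) ∧
    ((∀ x y : Q, (x * y) * x = x * (y * x)) → ∀ x y z : Q, (x * y) * (z * x) = x * ((y * z) * x)) ∧
    ((∀ x y : Q, x * (x * y) = (x * x) * y) → ∀ x y z : Q, (x * y) * (z * x) = x * ((y * z) * x)) := by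
  have hosb : IsOsborn Q := hosb
  exact ⟨hosb.isMoufang,
    fun hflex => hosb.isMoufang (hosb.hasLeftInverseProperty_of_isFlexible hflex),
    fun hlap => hosb.isMoufang (hosb.hasLeftInverseProperty_of_isLeftAlternative hlap)⟩
end
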